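/- arXiv:2501.19138 — 5 statements merged into one kernel-verified Lean document; each statement's English description precedes it below -/
import Mathlib

section
/- The directional derivative of the duality gap V at a point z = (x,y) in the direction z' = (x',y') ∈ Δ^{n-1}×Δ^{n-1}, defined as the limit as ε→0+ of [V((1-ε)z + εz') − V(z)]/ε, exists and equals max_{i ∈ BR_r(y)} e_i^T R y' − min_{j ∈ BR_c(x)} (x')^T R e_j − V(z), where BR_r(y) is the set of pure best responses of the row player to y and BR_c(x) the set of pure best responses of the column player to x. -/
/-!
For a finite family, the maximum of `(1 - ε) g + ε h` is, for small `ε > 0`, attained only at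
maximizers of `g`: elsewhere the strict gap to `max g` absorbs the perturbation. Among those
maximizers `h` decides, so the maximum is exactly affine in `ε` near `0`, with slope
`max_{argmax g} h - max g`. The duality gap is such a maximum minus the analogous minimum.
-/

open Matrix Finset

variable {n : ℕ}

/-- Duality gap: V(x,y) = max_i e_i^T R y - min_j x^T R e_j. -/
noncomputable def V [NeZero n] (R : Matrix (Fin n) (Fin n) ℝ) (x y : Fin n → ℝ) : ℝ :=
  (Finset.univ.sup' Finset.univ_nonempty fun i => (R *ᵥ y) i) -
  (Finset.univ.inf' Finset.univ_nonempty fun j => (x ᵥ* R) j)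

/-- ρ-best responses of the row player against y. -/
def BRr (R : Matrix (Fin n) (Fin n) ℝ) (ρ : ℝ) (y : Fin n → ℝ) : Set (Fin n) :=
  {i | ∀ k, (R *ᵥ y) k ≤ (R *ᵥ y) i + ρ}

/-- ρ-best responses of the column player against x. -/
def BRc (R : Matrix (Fin n) (Fin n) ℝ) (ρ : ℝ) (x : Fin n → ℝ) : Set (Fin n) :=
  {j | ∀ k, (x ᵥ* R) j ≤ (x ᵥ* R) k + ρ}

/-- ρ-directional derivative of the duality gap at (x,y) toward (x',y');
for ρ = 0 this is the exact directional derivative. -/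
noncomputable def dirDeriv [NeZero n] (R : Matrix (Fin n) (Fin n) ℝ) (ρ : ℝ)
    (x y x' y' : Fin n → ℝ) : ℝ :=
  sSup ((fun i => (R *ᵥ y') i) '' BRr R ρ y) -
  sInf ((fun j => (x' ᵥ* R) j) '' BRc R ρ x) - V R x y

open Filter Topology

lemma Finset.inf'_eq_neg_sup'_neg {ι : Type*} {s : Finset ι} (hs : s.Nonempty) (f : ι → ℝ) :
    s.inf' hs f = -s.sup' hs (fun i => -f i) := by
  apply le_antisymm
  · exact le_neg.2 <| Finset.sup'_le _ _ fun i hi => neg_le_neg (Finset.inf'_le f hi)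
  · exact Finset.le_inf' _ _ fun i hi => neg_le.2 (Finset.le_sup' (fun i => -f i) hi)

section SegmentSup

variable {ι : Type*} [Fintype ι] [Nonempty ι]

lemma eventually_sup'_segment_eq (g h : ι → ℝ) :
    ∀ᶠ ε in 𝓝[>] (0 : ℝ),
      univ.sup' univ_nonempty (fun i => (1 - ε) * g i + ε * h i) =
        (1 - ε) * univ.sup' univ_nonempty g + ε * sSup (h '' {i | ∀ k, g k ≤ g i}) := by
  set M := univ.sup' univ_nonempty g
  set A := {i | ∀ k, g k ≤ g i}
  set S := sSup (h '' A)
  have hA : A.Nonempty := Finite.exists_max g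
  have hS_mem : S ∈ h '' A := (hA.image h).csSup_mem (A.toFinite.image h)
  have le_S : ∀ i ∈ A, h i ≤ S := fun i hi =>
    le_csSup (A.toFinite.image h).bddAbove (Set.mem_image_of_mem h hi)
  have g_eq : ∀ i ∈ A, g i = M := fun i hi =>
    le_antisymm (le_sup' g (mem_univ i)) (sup'_le _ _ fun k _ => hi k)
  have g_lt : ∀ i ∉ A, g i < M := fun i hi => by
    obtain ⟨k, hk⟩ : ∃ k, g i < g k := by simpa [A] using hi
    exact hk.trans_le (le_sup' g (mem_univ k))
  have bound : ∀ i, ∀ᶠ ε in 𝓝[>] (0 : ℝ), (1 - ε) * g i + ε * h i ≤ (1 - ε) * M + ε * S := by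
    intro i
    by_cases hi : i ∈ A
    · filter_upwards [self_mem_nhdsWithin] with ε (hε : 0 < ε)
      rw [g_eq i hi]
      gcongr
      exact le_S i hi
    · have hlim : Tendsto (fun ε : ℝ => (1 - ε) * (M - g i) + ε * (S - h i)) (𝓝[>] 0)
          (𝓝 (M - g i)) :=
        ((by fun_prop : Continuous fun ε : ℝ => (1 - ε) * (M - g i) + ε * (S - h i)).tendsto'
          0 _ (by simp)).mono_left nhdsWithin_le_nhds
      filter_upwards [hlim.eventually_const_lt (sub_pos.2 (g_lt i hi))] with ε hε
      linarith
  filter_upwards [eventually_all.2 bound] with ε hε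
  refine le_antisymm (sup'_le _ _ fun i _ => hε i) ?_
  obtain ⟨i, hiA, hSi⟩ := hS_mem
  rw [← hSi, ← g_eq i hiA]
  exact le_sup' (fun i => (1 - ε) * g i + ε * h i) (mem_univ i)

lemma tendsto_slope_sup'_segment (g h : ι → ℝ) :
    Tendsto (fun ε : ℝ =>
        (univ.sup' univ_nonempty (fun i => (1 - ε) * g i + ε * h i) -
          univ.sup' univ_nonempty g) / ε)
      (𝓝[>] 0) (𝓝 (sSup (h '' {i | ∀ k, g k ≤ g i}) - univ.sup' univ_nonempty g)) := by
  refine tendsto_const_nhds.congr' ?_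
  filter_upwards [eventually_sup'_segment_eq g h, self_mem_nhdsWithin] with ε hε (hpos : 0 < ε)
  rw [hε]
  field_simp
  ring

lemma tendsto_slope_inf'_segment (g h : ι → ℝ) :
    Tendsto (fun ε : ℝ =>
        (univ.inf' univ_nonempty (fun i => (1 - ε) * g i + ε * h i) -
          univ.inf' univ_nonempty g) / ε)
      (𝓝[>] 0) (𝓝 (sInf (h '' {i | ∀ k, g i ≤ g k}) - univ.inf' univ_nonempty g)) := by
  have hneg := (tendsto_slope_sup'_segment (fun i => -g i) (fun i => -h i)).neg
  have hset : -(h '' {i | ∀ k, g i ≤ g k}) = (fun i => -h i) '' {i | ∀ k, -g k ≤ -g i} := by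
    simp only [← Set.image_neg_eq_neg, Set.image_image, neg_le_neg_iff]
  simp only [Finset.inf'_eq_neg_sup'_neg, Real.sInf_def, hset]
  convert hneg using 2 with ε
  · simp only [mul_neg, neg_add]
    ring
  · ring

end SegmentSup

theorem dualityGap_dirDeriv_general [NeZero n] (R : Matrix (Fin n) (Fin n) ℝ)
    (x y x' y' : Fin n → ℝ) :
    Filter.Tendsto
      (fun ε : ℝ =>
        (V R ((1 - ε) • x + ε • x') ((1 - ε) • y + ε • y') - V R x y) / ε)
      (nhdsWithin 0 (Set.Ioi 0))
      (nhds (dirDeriv R 0 x y x' y')) := by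
  have hBRr : BRr R 0 y = {i | ∀ k, (R *ᵥ y) k ≤ (R *ᵥ y) i} := by simp [BRr]
  have hBRc : BRc R 0 x = {j | ∀ k, (x ᵥ* R) j ≤ (x ᵥ* R) k} := by simp [BRc]
  convert (tendsto_slope_sup'_segment (R *ᵥ y) (R *ᵥ y')).sub
    (tendsto_slope_inf'_segment (x ᵥ* R) (x' ᵥ* R)) using 2 with ε
  · simp only [V, mulVec_add, mulVec_smul, add_vecMul, smul_vecMul, Pi.add_apply, Pi.smul_apply,
      smul_eq_mul]
    ring
  · simp only [dirDeriv, V, hBRr, hBRc]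
    ring

/-- The directional derivative of V at (x,y) toward (x',y') exists
(as a one-sided limit ε → 0⁺) and equals
max_{i ∈ BR_r(y)} e_i^T R y' − min_{j ∈ BR_c(x)} x'^T R e_j − V(x,y). -/
theorem dualityGap_dirDeriv [NeZero n] (R : Matrix (Fin n) (Fin n) ℝ)
    (hR : ∀ i j, R i j ∈ Set.Icc (0:ℝ) 1)
    (x y x' y' : Fin n → ℝ)
    (hx : x ∈ stdSimplex ℝ (Fin n)) (hy : y ∈ stdSimplex ℝ (Fin n))
    (hx' : x' ∈ stdSimplex ℝ (Fin n)) (hy' : y' ∈ stdSimplex ℝ (Fin n)) :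
    Filter.Tendsto
      (fun ε : ℝ =>
        (V R ((1 - ε) • x + ε • x') ((1 - ε) • y + ε • y') - V R x y) / ε)
      (nhdsWithin 0 (Set.Ioi 0))
      (nhds (dirDeriv R 0 x y x' y')) :=
  dualityGap_dirDeriv_general R x y x' y'
end

section
/- If the profile z = (x,y) is not a δ-Nash equilibrium for some δ ∈ [0,1], then the minimum over directions z' ∈ Δ^{n-1}×Δ^{n-1} of the ρ-directional derivative ∇_{ρ,z'}V(z) is strictly less than −δ. -/
/-!
Move toward an exact Nash equilibrium `(x*, y*)`, which exists by the von Neumann minimax theorem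
(a special case of Sion's). Every pure reply to `y*` pays the row player at most what `x*` secures
against every pure column, so the supremum in the directional derivative is bounded by the infimum
and the derivative is at most `-V(x, y)`. Since the payoff `xᵀ R y` is an average of both the row
payoffs `(R y)_i` and the column payoffs `(xᵀ R)_j`, failing to be a `δ`-equilibrium forces
`V(x, y) > δ`.
-/

open Matrix Finset

variable {n : ℕ}

/-- δ-approximate Nash equilibrium of the zero-sum game (R, -R). -/
def isApproxNE (R : Matrix (Fin n) (Fin n) ℝ) (δ : ℝ) (x y : Fin n → ℝ) : Prop :=
  (∀ i, (R *ᵥ y) i ≤ x ⬝ᵥ (R *ᵥ y) + δ) ∧ (∀ j, x ⬝ᵥ (R *ᵥ y) - δ ≤ (x ᵥ* R) j)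

theorem Matrix.exists_stdSimplex_mulVec_le_vecMul {ι κ : Type*} [Fintype ι] [Fintype κ]
    [Nonempty ι] [Nonempty κ] [DecidableEq ι] [DecidableEq κ] (R : Matrix ι κ ℝ) :
    ∃ x ∈ stdSimplex ℝ ι, ∃ y ∈ stdSimplex ℝ κ, ∀ i j, (R *ᵥ y) i ≤ (x ᵥ* R) j := by
  let B : (ι → ℝ) →ₗ[ℝ] (κ → ℝ) →ₗ[ℝ] ℝ := toLinearMap₂' ℝ R
  have hB (x y) : B x y = x ⬝ᵥ R *ᵥ y := toLinearMap₂'_apply' R x y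
  -- Sion's saddle point minimizes in the first variable, so `y` goes first.
  obtain ⟨y, hy, x, hx, hsaddle⟩ := Sion.exists_isSaddlePointOn (f := fun y x => B x y)
    (isPathConnected_stdSimplex κ).nonempty (convex_stdSimplex ℝ κ) (isCompact_stdSimplex ℝ κ)
    (fun x _ => (B x).continuous_of_finiteDimensional.continuousOn.lowerSemicontinuousOn)
    (fun x _ => ((B x).convexOn (convex_stdSimplex ℝ κ)).quasiconvexOn)
    (convex_stdSimplex ℝ ι) (isPathConnected_stdSimplex ι).nonempty (isCompact_stdSimplex ℝ ι)
    (fun y _ => (B.flip y).continuous_of_finiteDimensional.continuousOn.upperSemicontinuousOn)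
    (fun y _ => (B.flip y).concaveOn (convex_stdSimplex ℝ ι) |>.quasiconcaveOn)
  refine ⟨x, hx, y, hy, fun i j => ?_⟩
  have : B (Pi.single i 1) y ≤ B x (Pi.single j 1) :=
    hsaddle (Pi.single j 1) (single_mem_stdSimplex ℝ j) (Pi.single i 1) (single_mem_stdSimplex ℝ i)
  rwa [hB, hB, single_dotProduct, one_mul, dotProduct_mulVec, dotProduct_single, mul_one] at this

theorem dotProduct_le_sup'_of_mem_stdSimplex {ι : Type*} [Fintype ι] [Nonempty ι]
    {x : ι → ℝ} (hx : x ∈ stdSimplex ℝ ι) (u : ι → ℝ) :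
    x ⬝ᵥ u ≤ univ.sup' univ_nonempty u :=
  calc x ⬝ᵥ u = ∑ i, x i * u i := rfl
    _ ≤ ∑ i, x i * univ.sup' univ_nonempty u :=
      sum_le_sum fun i _ => mul_le_mul_of_nonneg_left (le_sup' u (mem_univ i)) (hx.1 i)
    _ = univ.sup' univ_nonempty u := by rw [← sum_mul, hx.2, one_mul]

theorem inf'_le_dotProduct_of_mem_stdSimplex {ι : Type*} [Fintype ι] [Nonempty ι]
    {x : ι → ℝ} (hx : x ∈ stdSimplex ℝ ι) (u : ι → ℝ) :
    univ.inf' univ_nonempty u ≤ x ⬝ᵥ u :=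
  calc univ.inf' univ_nonempty u = ∑ i, x i * univ.inf' univ_nonempty u := by
        rw [← sum_mul, hx.2, one_mul]
    _ ≤ x ⬝ᵥ u :=
      sum_le_sum fun i _ => mul_le_mul_of_nonneg_left (inf'_le u (mem_univ i)) (hx.1 i)

section

variable [NeZero n] {R : Matrix (Fin n) (Fin n) ℝ} {ρ : ℝ} {x y : Fin n → ℝ}

theorem lt_V_of_not_isApproxNE {δ : ℝ} (hx : x ∈ stdSimplex ℝ (Fin n))
    (hy : y ∈ stdSimplex ℝ (Fin n)) (h : ¬ isApproxNE R δ x y) : δ < V R x y := by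
  have hsup := dotProduct_le_sup'_of_mem_stdSimplex hx (R *ᵥ y)
  have hinf := inf'_le_dotProduct_of_mem_stdSimplex hy (x ᵥ* R)
  rw [dotProduct_comm, ← dotProduct_mulVec] at hinf
  unfold V
  rw [isApproxNE, not_and_or] at h
  push Not at h
  rcases h with ⟨i, hi⟩ | ⟨j, hj⟩
  · linarith [le_sup' (fun i => (R *ᵥ y) i) (mem_univ i)]
  · linarith [inf'_le (fun j => (x ᵥ* R) j) (mem_univ j)]

theorem BRr_nonempty (hρ : 0 ≤ ρ) : (BRr R ρ y).Nonempty := by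
  obtain ⟨i, -, hi⟩ := exists_max_image univ (R *ᵥ y) univ_nonempty
  exact ⟨i, fun k => by linarith [hi k (mem_univ k)]⟩

theorem BRc_nonempty (hρ : 0 ≤ ρ) : (BRc R ρ x).Nonempty := by
  obtain ⟨j, -, hj⟩ := exists_min_image univ (x ᵥ* R) univ_nonempty
  exact ⟨j, fun k => by linarith [hj k (mem_univ k)]⟩

theorem dirDeriv_le_neg_V (hρ : 0 ≤ ρ) {x' y' : Fin n → ℝ}
    (h : ∀ i j, (R *ᵥ y') i ≤ (x' ᵥ* R) j) : dirDeriv R ρ x y x' y' ≤ -V R x y := by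
  have hsup_le_inf : sSup ((fun i => (R *ᵥ y') i) '' BRr R ρ y) ≤
      sInf ((fun j => (x' ᵥ* R) j) '' BRc R ρ x) :=
    csSup_le ((BRr_nonempty hρ).image _) fun _ ⟨i, _, hi⟩ =>
      le_csInf ((BRc_nonempty hρ).image _) fun _ ⟨j, _, hj⟩ => hi ▸ hj ▸ h i j
  unfold dirDeriv
  linarith

end

theorem exists_dirDeriv_rho_lt_general [NeZero n] (R : Matrix (Fin n) (Fin n) ℝ)
    (ρ : ℝ) (hρ : 0 < ρ) (δ : ℝ)
    (x y : Fin n → ℝ)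
    (hx : x ∈ stdSimplex ℝ (Fin n)) (hy : y ∈ stdSimplex ℝ (Fin n))
    (hnot : ¬ isApproxNE R δ x y) :
    ∃ x' y', x' ∈ stdSimplex ℝ (Fin n) ∧ y' ∈ stdSimplex ℝ (Fin n) ∧
      dirDeriv R ρ x y x' y' < -δ := by
  obtain ⟨x', hx', y', hy', hsaddle⟩ := R.exists_stdSimplex_mulVec_le_vecMul
  exact ⟨x', y', hx', hy', (dirDeriv_le_neg_V hρ.le hsaddle).trans_lt
    (neg_lt_neg (lt_V_of_not_isApproxNE hx hy hnot))⟩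

/-- If (x,y) is not a δ-Nash equilibrium, then the minimum of the
ρ-directional derivative over directions is < −δ, i.e. some direction in the
product of simplices has ρ-directional derivative < −δ. -/
theorem exists_dirDeriv_rho_lt [NeZero n] (R : Matrix (Fin n) (Fin n) ℝ)
    (hR : ∀ i j, R i j ∈ Set.Icc (0:ℝ) 1)
    (ρ : ℝ) (hρ : 0 < ρ) (δ : ℝ) (hδ : δ ∈ Set.Icc (0:ℝ) 1)
    (x y : Fin n → ℝ)
    (hx : x ∈ stdSimplex ℝ (Fin n)) (hy : y ∈ stdSimplex ℝ (Fin n))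
    (hnot : ¬ isApproxNE R δ x y) :
    ∃ x' y', x' ∈ stdSimplex ℝ (Fin n) ∧ y' ∈ stdSimplex ℝ (Fin n) ∧
      dirDeriv R ρ x y x' y' < -δ :=
  exists_dirDeriv_rho_lt_general R ρ hρ δ x y hx hy hnot
end

section
/- If z = (x,y) is not a δ-Nash equilibrium for some δ ∈ [0,1], then there exists a direction z' ∈ Δ^{n-1}×Δ^{n-1} such that the (exact) directional derivative satisfies ∇_{z'}V(z) < −δ. In particular, taking z' to be a Nash equilibrium (x*,y*) works. -/
open Matrix Finset

variable {n : ℕ}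

/-- Nash equilibrium of the zero-sum game (R, -R). -/
def isNE (R : Matrix (Fin n) (Fin n) ℝ) (x y : Fin n → ℝ) : Prop :=
  (∀ i, (R *ᵥ y) i ≤ x ⬝ᵥ (R *ᵥ y)) ∧ (∀ j, x ⬝ᵥ (R *ᵥ y) ≤ (x ᵥ* R) j)

/-!
Against a Nash equilibrium `(xs, ys)` of value `v` no pure strategy beats `v`, so in the
directional derivative towards `(xs, ys)` the maximum over the row best responses is at most `v`
and the minimum over the column best responses is at least `v`: the derivative is at most
`-V x y`. If `(x, y)` is not a `δ`-equilibrium then `V x y > δ`. An equilibrium exists by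
von Neumann's minimax theorem: a `y` minimising `max_i (R y)_i =: v` exists by compactness, and
separating the convex set `R Δ` from the open box `{z | ∀ i, z i < v}` yields the row strategy.
-/

lemma ContinuousLinearMap.apply_eq_dotProduct {ι : Type*} [Fintype ι] [DecidableEq ι]
    (f : (ι → ℝ) →L[ℝ] ℝ) (z : ι → ℝ) : f z = (fun i => f (Pi.single i 1)) ⬝ᵥ z := by
  conv_lhs => rw [pi_eq_sum_univ' z]
  simp [dotProduct, mul_comm]

lemma nonpos_of_forall_mul_lt {a b : ℝ} (h : ∀ t, 0 ≤ t → t * a < b) : a ≤ 0 := by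
  by_contra! ha
  have := h (|b| / a) (by positivity)
  rw [div_mul_cancel₀ _ ha.ne'] at this
  exact (le_abs_self b).not_gt this

section Simplex

variable {ι : Type*} [Fintype ι]

lemma nonneg_and_mul_sum_le_of_forall_dotProduct_lt {c : ι → ℝ} {v s : ℝ}
    (h : ∀ b : ι → ℝ, (∀ i, b i < v) → c ⬝ᵥ b < s) : 0 ≤ c ∧ v * ∑ i, c i ≤ s := by
  classical
  have hconst : ∀ w < v, w * ∑ i, c i < s := fun w hw => by
    simpa [dotProduct, Finset.mul_sum, mul_comm] using h (Function.const ι w) fun _ => hw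
  have hc : 0 ≤ c := fun i => by
    refine neg_nonpos.1 (nonpos_of_forall_mul_lt (b := s - (v - 1) * ∑ i, c i) fun t ht => ?_)
    have hb := h (Function.const ι (v - 1) - t • Pi.single i 1) fun j => by
      have : 0 ≤ t * Pi.single (M := fun _ => ℝ) i 1 j :=
        mul_nonneg ht (by rw [Pi.single_apply]; split_ifs <;> norm_num)
      simp only [Pi.sub_apply, Function.const_apply, Pi.smul_apply, smul_eq_mul]
      linarith
    rw [dotProduct_sub, dotProduct_smul, dotProduct_single] at hb
    simp only [dotProduct, Function.const_apply, smul_eq_mul, mul_one, ← Finset.sum_mul] at hb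
    linarith
  refine ⟨hc, ?_⟩
  rcases (Finset.sum_nonneg fun i _ => hc i).eq_or_lt with hσ | hσ
  · have := hconst (v - 1) (by linarith)
    rw [← hσ] at this ⊢
    linarith
  · exact le_of_forall_lt fun u hu => by
      simpa [div_mul_cancel₀ _ hσ.ne'] using hconst (u / ∑ i, c i) ((div_lt_iff₀ hσ).2 hu)

lemma exists_mem_stdSimplex_forall_le_dotProduct {A : Set (ι → ℝ)} (hA : Convex ℝ A)
    (hAne : A.Nonempty) {v : ℝ} (hv : ∀ a ∈ A, ∃ i, v ≤ a i) :
    ∃ x ∈ stdSimplex ℝ ι, ∀ a ∈ A, v ≤ x ⬝ᵥ a := by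
  classical
  have hdisj : Disjoint (Set.univ.pi fun _ => Set.Iio v) A := by
    refine Set.disjoint_left.2 fun b hb hbA => ?_
    obtain ⟨i, hi⟩ := hv b hbA
    exact (hb i (Set.mem_univ i)).not_ge hi
  obtain ⟨f, s, hfB, hfA⟩ := geometric_hahn_banach_open (convex_pi fun _ _ => convex_Iio v)
    (isOpen_set_pi Set.finite_univ fun _ _ => isOpen_Iio) hA hdisj
  set c : ι → ℝ := fun i => f (Pi.single i 1)
  have hfc : ∀ z, f z = c ⬝ᵥ z := f.apply_eq_dotProduct
  obtain ⟨hc, hvs⟩ := nonneg_and_mul_sum_le_of_forall_dotProduct_lt (c := c) (v := v) (s := s)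
    fun b hb => hfc b ▸ hfB b fun i _ => hb i
  obtain ⟨a₀, ha₀⟩ := hAne
  have hσ : 0 < ∑ i, c i := by
    by_contra! hσ
    have hc0 : c = 0 := funext fun i => (Finset.sum_eq_zero_iff_of_nonneg fun i _ => hc i).1
      (hσ.antisymm (Finset.sum_nonneg fun i _ => hc i)) i (mem_univ i)
    have h1 := hfB (Function.const ι (v - 1)) fun _ _ => sub_one_lt v
    have h2 := hfA a₀ ha₀
    rw [hfc, hc0, zero_dotProduct] at h1 h2
    linarith
  refine ⟨(∑ i, c i)⁻¹ • c, ⟨fun i => mul_nonneg (inv_nonneg.2 hσ.le) (hc i), ?_⟩, fun a ha => ?_⟩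
  · simp only [Pi.smul_apply, smul_eq_mul]
    rw [← Finset.mul_sum, inv_mul_cancel₀ hσ.ne']
  · rw [smul_dotProduct, smul_eq_mul, le_inv_mul_iff₀ hσ, mul_comm, ← hfc]
    exact hvs.trans (hfA a ha)

variable [Nonempty ι] {x : ι → ℝ}

lemma dotProduct_le_sup' (hx : x ∈ stdSimplex ℝ ι) (w : ι → ℝ) :
    x ⬝ᵥ w ≤ univ.sup' univ_nonempty w := by
  simpa [centerMass, hx.2, dotProduct] using
    centerMass_le_sup (s := univ) (f := w) (fun i _ => hx.1 i) (by simp [hx.2])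

lemma inf'_le_dotProduct (hx : x ∈ stdSimplex ℝ ι) (w : ι → ℝ) :
    univ.inf' univ_nonempty w ≤ x ⬝ᵥ w := by
  simpa [centerMass, hx.2, dotProduct] using
    inf_le_centerMass (s := univ) (f := w) (fun i _ => hx.1 i) (by simp [hx.2])

end Simplex

section MatrixGame

variable [NeZero n] (R : Matrix (Fin n) (Fin n) ℝ)

theorem exists_isNE :
    ∃ x y, x ∈ stdSimplex ℝ (Fin n) ∧ y ∈ stdSimplex ℝ (Fin n) ∧ isNE R x y := by
  have hcont : Continuous fun y : Fin n → ℝ => univ.sup' univ_nonempty fun i => (R *ᵥ y) i :=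
    Continuous.finset_sup'_apply univ_nonempty fun i _ =>
      (continuous_apply i).comp (continuous_const.matrix_mulVec continuous_id)
  obtain ⟨y, hy, hmin⟩ := (isCompact_stdSimplex ℝ (Fin n)).exists_isMinOn
    ⟨_, single_mem_stdSimplex ℝ 0⟩ hcont.continuousOn
  set v := univ.sup' univ_nonempty (R *ᵥ y)
  obtain ⟨x, hx, hxv⟩ := exists_mem_stdSimplex_forall_le_dotProduct
    ((convex_stdSimplex ℝ _).linear_image R.mulVecLin) ⟨_, y, hy, rfl⟩ (v := v) (by
      rintro _ ⟨y', hy', rfl⟩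
      obtain ⟨i, -, hi⟩ := exists_mem_eq_sup' univ_nonempty (R *ᵥ y')
      exact ⟨i, (hmin hy').trans_eq hi⟩)
  refine ⟨x, y, hx, hy, fun i => (le_sup' _ (mem_univ i)).trans (hxv _ ⟨y, hy, rfl⟩), fun j => ?_⟩
  calc x ⬝ᵥ R *ᵥ y ≤ v := dotProduct_le_sup' hx _
    _ ≤ x ⬝ᵥ R *ᵥ Pi.single j 1 := hxv _ ⟨_, single_mem_stdSimplex ℝ j, rfl⟩
    _ = (x ᵥ* R) j := by rw [dotProduct_mulVec, dotProduct_single, mul_one]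

lemma nonempty_BRr {ρ : ℝ} (hρ : 0 ≤ ρ) (y : Fin n → ℝ) : (BRr R ρ y).Nonempty := by
  obtain ⟨i, hi⟩ := Finite.exists_max (R *ᵥ y)
  exact ⟨i, fun k => (hi k).trans (le_add_of_nonneg_right hρ)⟩

lemma nonempty_BRc {ρ : ℝ} (hρ : 0 ≤ ρ) (x : Fin n → ℝ) : (BRc R ρ x).Nonempty := by
  obtain ⟨j, hj⟩ := Finite.exists_min (x ᵥ* R)
  exact ⟨j, fun k => (hj k).trans (le_add_of_nonneg_right hρ)⟩

lemma isApproxNE_of_V_le {δ : ℝ} {x y : Fin n → ℝ} (hx : x ∈ stdSimplex ℝ (Fin n))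
    (hy : y ∈ stdSimplex ℝ (Fin n)) (h : V R x y ≤ δ) : isApproxNE R δ x y := by
  have hsup := dotProduct_le_sup' hx (R *ᵥ y)
  have hinf := inf'_le_dotProduct hy (x ᵥ* R)
  rw [dotProduct_comm, ← dotProduct_mulVec] at hinf
  unfold V at h
  exact ⟨fun i => by linarith [le_sup' (fun i => (R *ᵥ y) i) (mem_univ i)],
    fun j => by linarith [inf'_le (fun j => (x ᵥ* R) j) (mem_univ j)]⟩

lemma dirDeriv_le_neg_V_of_isNE {x y xs ys : Fin n → ℝ} (h : isNE R xs ys) :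
    dirDeriv R 0 x y xs ys ≤ -V R x y := by
  have hsup : sSup ((fun i => (R *ᵥ ys) i) '' BRr R 0 y) ≤ xs ⬝ᵥ R *ᵥ ys :=
    csSup_le ((nonempty_BRr R le_rfl y).image _) (by rintro _ ⟨i, -, rfl⟩; exact h.1 i)
  have hinf : xs ⬝ᵥ R *ᵥ ys ≤ sInf ((fun j => (xs ᵥ* R) j) '' BRc R 0 x) :=
    le_csInf ((nonempty_BRc R le_rfl x).image _) (by rintro _ ⟨j, -, rfl⟩; exact h.2 j)
  unfold dirDeriv
  linarith

end MatrixGame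

theorem exists_dirDeriv_lt_general [NeZero n] (R : Matrix (Fin n) (Fin n) ℝ)
    (δ : ℝ)
    (x y : Fin n → ℝ)
    (hx : x ∈ stdSimplex ℝ (Fin n)) (hy : y ∈ stdSimplex ℝ (Fin n))
    (hnot : ¬ isApproxNE R δ x y) :
    (∃ x' y', x' ∈ stdSimplex ℝ (Fin n) ∧ y' ∈ stdSimplex ℝ (Fin n) ∧
        dirDeriv R 0 x y x' y' < -δ) ∧
    (∀ xs ys, xs ∈ stdSimplex ℝ (Fin n) → ys ∈ stdSimplex ℝ (Fin n) →
        isNE R xs ys → dirDeriv R 0 x y xs ys < -δ) := by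
  have hV : δ < V R x y := lt_of_not_ge fun h => hnot (isApproxNE_of_V_le R hx hy h)
  have hNE : ∀ xs ys, xs ∈ stdSimplex ℝ (Fin n) → ys ∈ stdSimplex ℝ (Fin n) →
      isNE R xs ys → dirDeriv R 0 x y xs ys < -δ := fun _ _ _ _ h =>
    (dirDeriv_le_neg_V_of_isNE R h).trans_lt (neg_lt_neg hV)
  obtain ⟨xs, ys, hxs, hys, h⟩ := exists_isNE R
  exact ⟨⟨xs, ys, hxs, hys, hNE xs ys hxs hys h⟩, hNE⟩

/-- If (x,y) is not a δ-Nash equilibrium, there is a direction whose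
exact directional derivative is < −δ; in particular any Nash equilibrium works
as such a direction. -/
theorem exists_dirDeriv_lt [NeZero n] (R : Matrix (Fin n) (Fin n) ℝ)
    (hR : ∀ i j, R i j ∈ Set.Icc (0:ℝ) 1)
    (δ : ℝ) (hδ : δ ∈ Set.Icc (0:ℝ) 1)
    (x y : Fin n → ℝ)
    (hx : x ∈ stdSimplex ℝ (Fin n)) (hy : y ∈ stdSimplex ℝ (Fin n))
    (hnot : ¬ isApproxNE R δ x y) :
    (∃ x' y', x' ∈ stdSimplex ℝ (Fin n) ∧ y' ∈ stdSimplex ℝ (Fin n) ∧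
        dirDeriv R 0 x y x' y' < -δ) ∧
    (∀ xs ys, xs ∈ stdSimplex ℝ (Fin n) → ys ∈ stdSimplex ℝ (Fin n) →
        isNE R xs ys → dirDeriv R 0 x y xs ys < -δ) :=
  exists_dirDeriv_lt_general R δ x y hx hy hnot
end

section
/- Let ρ ∈ (0,1] and ε ≤ ρ/2. For any y, y' ∈ Δ^{n-1}, if the set of strategies outside BR_r^ρ(y) is nonempty, then max over i not in BR_r^ρ(y) of e_i^T R ((1−ε)y + εy') is at most max over i in BR_r^ρ(y) of e_i^T R ((1−ε)y + εy'). In other words, after a step of size ε ≤ ρ/2, no strategy outside the ρ-best-response set can become the overall best response. -/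
open Matrix Finset

variable {n : ℕ}

/-! A strategy outside `BRr R ρ y` trails the best response against `y` by more than `ρ`.
Moving the opponent a step `ε` towards `y'` costs the leader at most `ε` relative to it, since
payoffs lie in `[0, 1]`, while the remaining lead is still `(1 - ε) ρ ≥ ε` because
`ε ≤ ρ / 2 ≤ ρ / (1 + ρ)` for `ρ ≤ 1`. -/

lemma mulVec_mem_Icc_of_mem_stdSimplex {m ι : Type*} [Fintype ι] {R : Matrix m ι ℝ}
    (hR : ∀ i j, R i j ∈ Set.Icc (0:ℝ) 1) {w : ι → ℝ} (hw : w ∈ stdSimplex ℝ ι) (i : m) :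
    (R *ᵥ w) i ∈ Set.Icc (0:ℝ) 1 := by
  obtain ⟨hw0, hw1⟩ := hw
  refine ⟨Finset.sum_nonneg fun j _ => mul_nonneg (hR i j).1 (hw0 j), ?_⟩
  calc (R *ᵥ w) i = ∑ j, R i j * w j := rfl
    _ ≤ ∑ j, w j := Finset.sum_le_sum fun j _ => mul_le_of_le_one_left (hw0 j) (hR i j).2
    _ = 1 := hw1

lemma lt_of_notMem_BRr {R : Matrix (Fin n) (Fin n) ℝ} {ρ : ℝ} {y : Fin n → ℝ} {i i₀ : Fin n}
    (hi : i ∉ BRr R ρ y) (hi₀ : ∀ k, (R *ᵥ y) k ≤ (R *ᵥ y) i₀) :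
    (R *ᵥ y) i + ρ < (R *ᵥ y) i₀ := by
  obtain ⟨k, hk⟩ : ∃ k, (R *ᵥ y) i + ρ < (R *ᵥ y) k := by simpa [BRr] using hi
  exact hk.trans_le (hi₀ k)

lemma mulVec_step_le_of_notMem_BRr {R : Matrix (Fin n) (Fin n) ℝ}
    (hR : ∀ i j, R i j ∈ Set.Icc (0:ℝ) 1) {ρ ε : ℝ} (hρ : ρ ≤ 1) (hε : 0 ≤ ε) (hερ : ε ≤ ρ / 2)
    {y y' : Fin n → ℝ} (hy' : y' ∈ stdSimplex ℝ (Fin n)) {i i₀ : Fin n}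
    (hi : i ∉ BRr R ρ y) (hi₀ : ∀ k, (R *ᵥ y) k ≤ (R *ᵥ y) i₀) :
    (R *ᵥ ((1 - ε) • y + ε • y')) i ≤ (R *ᵥ ((1 - ε) • y + ε • y')) i₀ := by
  have hgap := lt_of_notMem_BRr hi hi₀
  have hlead : ε ≤ (1 - ε) * ρ := by nlinarith
  have hloss : ε * ((R *ᵥ y') i - (R *ᵥ y') i₀) ≤ ε := by
    have := (mulVec_mem_Icc_of_mem_stdSimplex hR hy' i).2
    have := (mulVec_mem_Icc_of_mem_stdSimplex hR hy' i₀).1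
    exact mul_le_of_le_one_right hε (by linarith)
  have hkeep := mul_le_mul_of_nonneg_left hgap.le (by linarith : (0:ℝ) ≤ 1 - ε)
  simp only [mulVec_add, mulVec_smul, Pi.add_apply, Pi.smul_apply, smul_eq_mul]
  linarith

theorem step_preserves_row_best_responses_general [NeZero n] (R : Matrix (Fin n) (Fin n) ℝ)
    (hR : ∀ i j, R i j ∈ Set.Icc (0:ℝ) 1)
    (ρ : ℝ) (hρ : ρ ∈ Set.Ioc (0:ℝ) 1)
    (ε : ℝ) (hε : 0 < ε) (hερ : ε ≤ ρ / 2)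
    (y y' : Fin n → ℝ)
    (hy' : y' ∈ stdSimplex ℝ (Fin n))
    (hne : ((BRr R ρ y)ᶜ).Nonempty) :
    sSup ((fun i => (R *ᵥ ((1 - ε) • y + ε • y')) i) '' (BRr R ρ y)ᶜ) ≤
      sSup ((fun i => (R *ᵥ ((1 - ε) • y + ε • y')) i) '' BRr R ρ y) := by
  obtain ⟨i₀, hi₀⟩ := Finite.exists_max (R *ᵥ y)
  have hi₀_mem : i₀ ∈ BRr R ρ y := fun k => le_add_of_le_of_nonneg (hi₀ k) hρ.1.le
  refine csSup_le (hne.image _) ?_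
  rintro _ ⟨i, hi, rfl⟩
  exact (mulVec_step_le_of_notMem_BRr hR hρ.2 hε.le hερ hy' hi hi₀).trans
    (le_csSup (Set.toFinite _).bddAbove ⟨i₀, hi₀_mem, rfl⟩)

/-- After a step of size ε ≤ ρ/2, no row strategy outside the
ρ-best-response set can beat the strategies inside it. -/
theorem step_preserves_row_best_responses [NeZero n] (R : Matrix (Fin n) (Fin n) ℝ)
    (hR : ∀ i j, R i j ∈ Set.Icc (0:ℝ) 1)
    (ρ : ℝ) (hρ : ρ ∈ Set.Ioc (0:ℝ) 1)
    (ε : ℝ) (hε : 0 < ε) (hερ : ε ≤ ρ / 2)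
    (y y' : Fin n → ℝ)
    (hy : y ∈ stdSimplex ℝ (Fin n)) (hy' : y' ∈ stdSimplex ℝ (Fin n))
    (hne : ((BRr R ρ y)ᶜ).Nonempty) :
    sSup ((fun i => (R *ᵥ ((1 - ε) • y + ε • y')) i) '' (BRr R ρ y)ᶜ) ≤
      sSup ((fun i => (R *ᵥ ((1 - ε) • y + ε • y')) i) '' BRr R ρ y) :=
  step_preserves_row_best_responses_general R hR ρ hρ ε hε hερ y y' hy' hne
end

section
/- Let ρ ∈ (0,1] and ε ≤ ρ/2. For any x, x' ∈ Δ^{n-1}, if the complement of BR_c^ρ(x) is nonempty, then min over j not in BR_c^ρ(x) of ((1−ε)x + εx')^T R e_j is at least min over j in BR_c^ρ(x) of ((1−ε)x + εx')^T R e_j. -/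
open Matrix Finset

variable {n : ℕ}

/-! A minimiser `j₀` of `x ᵥ* R` is a ρ-best response, while every `j` outside `BRc R ρ x` beats
it by more than `ρ` against `x`. Moving a step `ε` towards `x'` shifts each payoff by at most `ε`
(payoffs lie in `[0, 1]`), and `ε ≤ ρ / 2` with `ρ ≤ 1` gives `ε ≤ (1 - ε) ρ`, so after the step
`j₀` still does at least as well as every such `j`. -/

theorem vecMul_apply_mem_Icc_of_mem_stdSimplex {ι κ : Type*} [Fintype ι] (R : Matrix ι κ ℝ)
    (hR : ∀ i j, R i j ∈ Set.Icc (0 : ℝ) 1) {z : ι → ℝ} (hz : z ∈ stdSimplex ℝ ι) (j : κ) :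
    (z ᵥ* R) j ∈ Set.Icc (0 : ℝ) 1 := by
  refine ⟨Finset.sum_nonneg fun i _ => mul_nonneg (hz.1 i) (hR i j).1, ?_⟩
  calc (z ᵥ* R) j = ∑ i, z i * R i j := rfl
    _ ≤ ∑ i, z i := Finset.sum_le_sum fun i _ => mul_le_of_le_one_right (hz.1 i) (hR i j).2
    _ = 1 := hz.2

theorem vecMul_convexComb_apply {ι κ : Type*} [Fintype ι] (R : Matrix ι κ ℝ) (ε : ℝ)
    (x x' : ι → ℝ) (j : κ) :
    (((1 - ε) • x + ε • x') ᵥ* R) j = (1 - ε) * (x ᵥ* R) j + ε * (x' ᵥ* R) j := by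
  simp only [add_vecMul, smul_vecMul, Pi.add_apply, Pi.smul_apply, smul_eq_mul]

theorem mem_BRc_of_isMin {R : Matrix (Fin n) (Fin n) ℝ} {ρ : ℝ} (hρ : 0 ≤ ρ) {x : Fin n → ℝ}
    {j₀ : Fin n} (hj₀ : ∀ k, (x ᵥ* R) j₀ ≤ (x ᵥ* R) k) : j₀ ∈ BRc R ρ x :=
  fun k => le_add_of_le_of_nonneg (hj₀ k) hρ

theorem add_lt_of_notMem_BRc {R : Matrix (Fin n) (Fin n) ℝ} {ρ : ℝ} {x : Fin n → ℝ}
    {j₀ j : Fin n} (hj₀ : ∀ k, (x ᵥ* R) j₀ ≤ (x ᵥ* R) k) (hj : j ∉ BRc R ρ x) :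
    (x ᵥ* R) j₀ + ρ < (x ᵥ* R) j := by
  obtain ⟨k, hk⟩ : ∃ k, (x ᵥ* R) k + ρ < (x ᵥ* R) j := by
    simpa only [BRc, Set.mem_ofPred_eq, not_forall, not_le] using hj
  linarith [hj₀ k]

theorem convexComb_le_convexComb_of_add_le {a a' b b' ρ ε : ℝ} (hab : a + ρ ≤ b) (ha' : a' ≤ 1)
    (hb' : 0 ≤ b') (hε : 0 ≤ ε) (hερ : ε ≤ ρ / 2) (hρ : ρ ≤ 1) :
    (1 - ε) * a + ε * a' ≤ (1 - ε) * b + ε * b' := by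
  have h1ε : 0 ≤ 1 - ε := by linarith
  calc (1 - ε) * a + ε * a' ≤ (1 - ε) * a + ε * 1 := by gcongr
    _ ≤ (1 - ε) * a + (1 - ε) * ρ := by nlinarith
    _ ≤ (1 - ε) * b + ε * b' := by nlinarith

theorem step_preserves_col_best_responses_general (R : Matrix (Fin n) (Fin n) ℝ)
    (hR : ∀ i j, R i j ∈ Set.Icc (0:ℝ) 1)
    (ρ : ℝ) (hρ : ρ ∈ Set.Ioc (0:ℝ) 1)
    (ε : ℝ) (hε : 0 < ε) (hερ : ε ≤ ρ / 2)
    (x x' : Fin n → ℝ)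
    (hx' : x' ∈ stdSimplex ℝ (Fin n))
    (hne : ((BRc R ρ x)ᶜ).Nonempty) :
    sInf ((fun j => ((((1 - ε) • x + ε • x')) ᵥ* R) j) '' BRc R ρ x) ≤
      sInf ((fun j => ((((1 - ε) • x + ε • x')) ᵥ* R) j) '' (BRc R ρ x)ᶜ) := by
  have : Nonempty (Fin n) := ⟨hne.some⟩
  obtain ⟨j₀, hj₀⟩ := Finite.exists_min (x ᵥ* R)
  have hpayoff := vecMul_apply_mem_Icc_of_mem_stdSimplex R hR hx'
  calc _ ≤ (((1 - ε) • x + ε • x') ᵥ* R) j₀ :=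
        csInf_le (Set.toFinite _).bddBelow
          (Set.mem_image_of_mem _ (mem_BRc_of_isMin hρ.1.le hj₀))
    _ ≤ _ := by
      refine le_csInf (hne.image _) ?_
      rintro _ ⟨j, hj, rfl⟩
      simp only [vecMul_convexComb_apply]
      exact convexComb_le_convexComb_of_add_le (add_lt_of_notMem_BRc hj₀ hj).le (hpayoff j₀).2
        (hpayoff j).1 hε.le hερ hρ.2

/-- After a step of size ε ≤ ρ/2, no column strategy outside the
ρ-best-response set can attain a value below the strategies inside it. -/
theorem step_preserves_col_best_responses [NeZero n] (R : Matrix (Fin n) (Fin n) ℝ)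
    (hR : ∀ i j, R i j ∈ Set.Icc (0:ℝ) 1)
    (ρ : ℝ) (hρ : ρ ∈ Set.Ioc (0:ℝ) 1)
    (ε : ℝ) (hε : 0 < ε) (hερ : ε ≤ ρ / 2)
    (x x' : Fin n → ℝ)
    (hx : x ∈ stdSimplex ℝ (Fin n)) (hx' : x' ∈ stdSimplex ℝ (Fin n))
    (hne : ((BRc R ρ x)ᶜ).Nonempty) :
    sInf ((fun j => ((((1 - ε) • x + ε • x')) ᵥ* R) j) '' BRc R ρ x) ≤
      sInf ((fun j => ((((1 - ε) • x + ε • x')) ᵥ* R) j) '' (BRc R ρ x)ᶜ) :=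
  step_preserves_col_best_responses_general R hR ρ hρ ε hε hερ x x' hx' hne
end
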